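/- Let X̄ be the space of ρ-paths from a basepoint in a length space X with metric d(c₁,c₂)=L(c₁)+L(c₂)−2L(c₁∧c₂), and let * denote the constant path. The Gromov product (c₁,c₂)_* := ½[d(*,c₁)+d(*,c₂)−d(c₁,c₂)] equals L(c₁∧c₂), and it satisfies the 0-hyperbolicity inequality (c₁,c₂)_* ≥ min{(c₁,c₃)_*, (c₃,c₂)_*} for all c₁,c₂,c₃ ∈ X̄. -/

import Mathlib

open Set

/-- An arclength-parameterized weakly normal rectifiable path (ρ-path) in a metric
space `X`.  The path is defined on `[0, len]`, extended constantly outside. -/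
structure RPath (X : Type*) [MetricSpace X] where
  /-- the length of the path -/
  len : ℝ
  len_nonneg : 0 ≤ len
  toFun : ℝ → X
  contOn : ContinuousOn toFun (Icc 0 len)
  /-- arclength parameterization: the length of the restriction to `[s,t]` is `t - s`. -/
  arclength : ∀ s t : ℝ, 0 ≤ s → s ≤ t → t ≤ len →
    eVariationOn toFun (Icc s t) = ENNReal.ofReal (t - s)
  clamp_left : ∀ t : ℝ, t ≤ 0 → toFun t = toFun 0
  clamp_right : ∀ t : ℝ, len ≤ t → toFun t = toFun len
  /-- weak normality: no nontrivial subsegment `[u,v]` with equal endpoints is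
  null-homotopic in its own image rel endpoints. -/
  weaklyNormal : ¬ ∃ u v : ℝ, 0 ≤ u ∧ u < v ∧ v ≤ len ∧ toFun u = toFun v ∧
    ∃ H : ℝ × ℝ → X, ContinuousOn H (Icc u v ×ˢ Icc 0 1) ∧
      (∀ t ∈ Icc u v, H (t, 0) = toFun t) ∧
      (∀ t ∈ Icc u v, H (t, 1) = toFun u) ∧
      (∀ s ∈ Icc (0:ℝ) 1, H (u, s) = toFun u ∧ H (v, s) = toFun v) ∧
      (∀ p ∈ Icc u v ×ˢ Icc (0:ℝ) 1, H p ∈ toFun '' Icc u v)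

namespace RPath

variable {X : Type*} [MetricSpace X]

/-- `c` starts at the point `p`. -/
def StartsAt (c : RPath X) (p : X) : Prop := c.toFun 0 = p

/-- `c` ends at the point `p`. -/
def EndsAt (c : RPath X) (p : X) : Prop := c.toFun c.len = p

/-- The length `L(c₁ ∧ c₂)` of the longest common initial segment of two paths. -/
noncomputable def wedgeLen (c₁ c₂ : RPath X) : ℝ :=
  sSup {b : ℝ | 0 ≤ b ∧ b ≤ c₁.len ∧ b ≤ c₂.len ∧ ∀ t ∈ Icc 0 b, c₁.toFun t = c₂.toFun t}

/-- The distance `d(c₁,c₂) = L(c₁) + L(c₂) - 2 L(c₁ ∧ c₂)`. -/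
noncomputable def rhoDist (c₁ c₂ : RPath X) : ℝ :=
  c₁.len + c₂.len - 2 * wedgeLen c₁ c₂

end RPath

/-- A length space: a metric space with at least two points in which any two points
are joined by paths of length arbitrarily close to the distance between them. -/
def IsLengthSpace (X : Type*) [MetricSpace X] : Prop :=
  (∃ x y : X, x ≠ y) ∧
  ∀ x y : X, ∀ ε : ℝ, 0 < ε → ∃ (c : ℝ → X) (b : ℝ), 0 ≤ b ∧
    ContinuousOn c (Icc 0 b) ∧ c 0 = x ∧ c b = y ∧
    eVariationOn c (Icc 0 b) < ENNReal.ofReal (dist x y + ε)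

/-- The constant path at `p` (a ρ-path of length `0`). -/
noncomputable def RPath.const {X : Type*} [MetricSpace X] (p : X) : RPath X where
  len := 0
  len_nonneg := le_rfl
  toFun := fun _ => p
  contOn := continuousOn_const
  arclength := by
    intro s t hs hst ht
    have hs0 : s = 0 := le_antisymm (hst.trans ht) hs
    have ht0 : t = 0 := le_antisymm ht (hs0 ▸ hst)
    subst hs0; subst ht0
    rw [eVariationOn.subsingleton _ (by simp [Set.Icc_self])]
    simp
  clamp_left := fun _ _ => rfl
  clamp_right := fun _ _ => rfl
  weaklyNormal := by
    rintro ⟨u, v, hu, huv, hv, -⟩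
    linarith

/-- The Gromov product `(c₁,c₂)_* = ½[d(*,c₁) + d(*,c₂) - d(c₁,c₂)]` with respect to
the constant path `*`. -/
noncomputable def gromovProd {X : Type*} [MetricSpace X] (base : X) (c₁ c₂ : RPath X) : ℝ :=
  (RPath.rhoDist (RPath.const base) c₁ + RPath.rhoDist (RPath.const base) c₂
    - RPath.rhoDist c₁ c₂) / 2

/-! Since `* ∧ c` is the constant path, `d(*, c) = L(c)`, so the Gromov product collapses to
`L(c₁ ∧ c₂)`. The 0-hyperbolicity is then the ultrametric property of common initial segments:
if `c₁, c₃` and `c₃, c₂` agree on `[0, b]`, so do `c₁, c₂`. -/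

namespace RPath

variable {X : Type*} [MetricSpace X]

lemma wedgeLen_nonneg (c₁ c₂ : RPath X) : 0 ≤ wedgeLen c₁ c₂ :=
  Real.sSup_nonneg fun _ hb => hb.1

lemma wedgeLen_le_len_left (c₁ c₂ : RPath X) : wedgeLen c₁ c₂ ≤ c₁.len :=
  Real.sSup_le (fun _ hb => hb.2.1) c₁.len_nonneg

lemma wedgeLen_le_len_right (c₁ c₂ : RPath X) : wedgeLen c₁ c₂ ≤ c₂.len :=
  Real.sSup_le (fun _ hb => hb.2.2.1) c₂.len_nonneg

lemma le_wedgeLen {c₁ c₂ : RPath X} {b : ℝ} (hb : 0 ≤ b) (h₁ : b ≤ c₁.len) (h₂ : b ≤ c₂.len)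
    (h : ∀ t ∈ Icc 0 b, c₁.toFun t = c₂.toFun t) : b ≤ wedgeLen c₁ c₂ :=
  le_csSup ⟨c₁.len, fun _ hb => hb.2.1⟩ ⟨hb, h₁, h₂, h⟩

lemma toFun_eq_of_lt_wedgeLen {c₁ c₂ : RPath X} {t : ℝ} (ht₀ : 0 ≤ t)
    (ht : t < wedgeLen c₁ c₂) : c₁.toFun t = c₂.toFun t := by
  -- `sSup ∅ = 0` in `ℝ`, so `0 ≤ t < wedgeLen c₁ c₂` rules out an empty defining set.
  have hne : {b : ℝ | 0 ≤ b ∧ b ≤ c₁.len ∧ b ≤ c₂.len ∧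
      ∀ t ∈ Icc 0 b, c₁.toFun t = c₂.toFun t}.Nonempty := by
    refine Set.nonempty_iff_ne_empty.2 fun hempty => ?_
    rw [wedgeLen, hempty, Real.sSup_empty] at ht
    linarith
  obtain ⟨b, hb, htb⟩ := exists_lt_of_lt_csSup hne ht
  exact hb.2.2.2 t ⟨ht₀, htb.le⟩

lemma min_wedgeLen_le_wedgeLen (c₁ c₂ c₃ : RPath X) :
    min (wedgeLen c₁ c₃) (wedgeLen c₃ c₂) ≤ wedgeLen c₁ c₂ := by
  refine le_of_forall_lt_imp_le_of_dense fun b hb => ?_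
  rcases lt_or_ge b 0 with hb₀ | hb₀
  · exact hb₀.le.trans (wedgeLen_nonneg c₁ c₂)
  obtain ⟨hb₁₃, hb₃₂⟩ := lt_min_iff.mp hb
  refine le_wedgeLen hb₀ (hb₁₃.le.trans (wedgeLen_le_len_left c₁ c₃))
    (hb₃₂.le.trans (wedgeLen_le_len_right c₃ c₂)) fun t ht => ?_
  rw [toFun_eq_of_lt_wedgeLen ht.1 (ht.2.trans_lt hb₁₃),
    toFun_eq_of_lt_wedgeLen ht.1 (ht.2.trans_lt hb₃₂)]

lemma wedgeLen_const_left (p : X) (c : RPath X) : wedgeLen (const p) c = 0 :=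
  le_antisymm (wedgeLen_le_len_left _ c) (wedgeLen_nonneg _ c)

lemma rhoDist_const_left (p : X) (c : RPath X) : rhoDist (const p) c = c.len := by
  rw [rhoDist, wedgeLen_const_left]
  simp [const]

end RPath

lemma gromovProd_eq_wedgeLen {X : Type*} [MetricSpace X] (base : X) (c₁ c₂ : RPath X) :
    gromovProd base c₁ c₂ = RPath.wedgeLen c₁ c₂ := by
  rw [gromovProd, RPath.rhoDist_const_left, RPath.rhoDist_const_left, RPath.rhoDist]
  ring

theorem gromovProd_eq_wedgeLen_and_zero_hyperbolic_general {X : Type*} [MetricSpace X]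
    (base : X) :
    (∀ c₁ c₂ : RPath X, c₁.StartsAt base → c₂.StartsAt base →
      gromovProd base c₁ c₂ = RPath.wedgeLen c₁ c₂) ∧
    (∀ c₁ c₂ c₃ : RPath X, c₁.StartsAt base → c₂.StartsAt base → c₃.StartsAt base →
      min (gromovProd base c₁ c₃) (gromovProd base c₃ c₂) ≤ gromovProd base c₁ c₂) := by
  refine ⟨fun c₁ c₂ _ _ => gromovProd_eq_wedgeLen base c₁ c₂, fun c₁ c₂ c₃ _ _ _ => ?_⟩
  simp only [gromovProd_eq_wedgeLen]
  exact RPath.min_wedgeLen_le_wedgeLen c₁ c₂ c₃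

/-- In the space of ρ-paths from the basepoint, the Gromov product
with respect to the constant path `*` equals `L(c₁ ∧ c₂)`, and it satisfies the
0-hyperbolicity inequality. -/
theorem gromovProd_eq_wedgeLen_and_zero_hyperbolic {X : Type*} [MetricSpace X]
    (hX : IsLengthSpace X) (base : X) :
    (∀ c₁ c₂ : RPath X, c₁.StartsAt base → c₂.StartsAt base →
      gromovProd base c₁ c₂ = RPath.wedgeLen c₁ c₂) ∧
    (∀ c₁ c₂ c₃ : RPath X, c₁.StartsAt base → c₂.StartsAt base → c₃.StartsAt base →
      min (gromovProd base c₁ c₃) (gromovProd base c₃ c₂) ≤ gromovProd base c₁ c₂) :=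
  gromovProd_eq_wedgeLen_and_zero_hyperbolic_general base
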